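/- Let (S,d) be a complete separable metric space and let M ⊆ M(S) be a set of finite signed Borel measures such that sup_{μ ∈ M} ‖μ‖_TV < ∞ and M is uniformly tight. Then the σ(M(S), BL(S))-weak topology and the topology induced by the norm ‖·‖*_BL coincide on M. -/

import Mathlib

open MeasureTheory Filter Topology

/-- A function is bounded Lipschitz. -/
def IsBL {S : Type*} [PseudoMetricSpace S] (f : S → ℝ) : Prop :=
  (∃ C : ℝ, ∀ x, |f x| ≤ C) ∧ ∃ K : NNReal, LipschitzWith K f

/-- Pairing of a finite signed Borel measure with a function, via the Jordan decomposition. -/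
noncomputable def pairing {S : Type*} [MeasurableSpace S] (μ : SignedMeasure S) (f : S → ℝ) : ℝ :=
  (∫ x, f x ∂μ.toJordanDecomposition.posPart) - ∫ x, f x ∂μ.toJordanDecomposition.negPart

/-- Total variation norm of a finite signed measure. -/
noncomputable def tvNorm {S : Type*} [MeasurableSpace S] (μ : SignedMeasure S) : ℝ :=
  (μ.totalVariation Set.univ).toReal

/-- Dual bounded Lipschitz norm on signed measures. -/
noncomputable def blDualNorm {S : Type*} [PseudoMetricSpace S] [MeasurableSpace S]
    (μ : SignedMeasure S) : ℝ :=
  sSup {r : ℝ | ∃ (f : S → ℝ) (C : ℝ) (K : NNReal), (∀ x, |f x| ≤ C) ∧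
    LipschitzWith K f ∧ C + (K : ℝ) ≤ 1 ∧ r = |pairing μ f|}

/-- The `σ(M(S), BL(S))`-weak topology on `M(S)`: the coarsest topology making
`μ ↦ ⟨μ, f⟩` continuous for every bounded Lipschitz `f`. -/
noncomputable def weakTop (S : Type*) [PseudoMetricSpace S] [MeasurableSpace S] :
    TopologicalSpace (SignedMeasure S) :=
  ⨅ f : {g : S → ℝ // IsBL g},
    TopologicalSpace.induced (fun μ : SignedMeasure S => pairing μ f.1) inferInstance

/-- The topology on `M(S)` induced by the norm `‖·‖*_BL`, generated by the open balls. -/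
noncomputable def normTop (S : Type*) [PseudoMetricSpace S] [MeasurableSpace S] :
    TopologicalSpace (SignedMeasure S) :=
  TopologicalSpace.generateFrom
    {B | ∃ (μ : SignedMeasure S) (ε : ℝ), 0 < ε ∧ B = {ν | blDualNorm (ν - μ) < ε}}

/-!
Pairing with a bounded Lipschitz `f` is `‖·‖*_BL`-continuous, since `|⟨μ, f⟩| ≤ ‖f‖_BL ‖μ‖*_BL`;
so the norm topology is finer. Conversely, given `ε > 0` pick a compact `K` carrying every
`μ ∈ M` up to `ε`. Rounding values on a finite net of `K` shows that finitely many functions `T`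
with `‖g‖_∞, |g|_L ≤ 1` approximate every such function uniformly on `K`. For `f` in the unit
ball of `BL(S)` and `g ∈ T` close to it on `K`, the bound on `‖·‖_TV` controls `⟨ρ - ν, f - g⟩`
on `K` and tightness controls it off `K`; so `‖ρ - ν‖*_BL` is small for `ρ, ν ∈ M` as soon as the
finitely many pairings `⟨ρ - ν, g⟩`, `g ∈ T`, are, which is a weak neighbourhood condition.
-/

section Pairing
variable {S : Type*} [MeasurableSpace S]

lemma integrable_of_abs_le {m : Measure S} [IsFiniteMeasure m] {f : S → ℝ} {C : ℝ}
    (hf : Measurable f) (hb : ∀ x, |f x| ≤ C) : Integrable f m :=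
  .of_bound hf.aestronglyMeasurable C (.of_forall hb)

lemma pairing_eq_integral_sub_integral {μ : SignedMeasure S} {P N : Measure S}
    [IsFiniteMeasure P] [IsFiniteMeasure N] (hμ : μ = P.toSignedMeasure - N.toSignedMeasure)
    {f : S → ℝ} {C : ℝ} (hf : Measurable f) (hb : ∀ x, |f x| ≤ C) :
    pairing μ f = ∫ x, f x ∂P - ∫ x, f x ∂N := by
  set j := μ.toJordanDecomposition
  have hsum : j.posPart + N = P + j.negPart := by
    rw [← Measure.toSignedMeasure_eq_toSignedMeasure_iff, Measure.toSignedMeasure_add,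
      Measure.toSignedMeasure_add, ← sub_eq_sub_iff_add_eq_add, ← hμ,
      ← JordanDecomposition.toSignedMeasure, μ.toSignedMeasure_toJordanDecomposition]
  have hint := congrArg (fun m => ∫ x, f x ∂m) hsum
  simp only [integral_add_measure (integrable_of_abs_le hf hb) (integrable_of_abs_le hf hb)]
    at hint
  rw [pairing]
  linarith

lemma pairing_sub (μ ν : SignedMeasure S) {f : S → ℝ} {C : ℝ} (hf : Measurable f)
    (hb : ∀ x, |f x| ≤ C) : pairing (μ - ν) f = pairing μ f - pairing ν f := by
  set jμ := μ.toJordanDecomposition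
  set jν := ν.toJordanDecomposition
  have hdecomp : μ - ν = (jμ.posPart + jν.negPart).toSignedMeasure
      - (jμ.negPart + jν.posPart).toSignedMeasure := by
    conv_lhs => rw [← μ.toSignedMeasure_toJordanDecomposition,
      ← ν.toSignedMeasure_toJordanDecomposition]
    rw [Measure.toSignedMeasure_add, Measure.toSignedMeasure_add,
      JordanDecomposition.toSignedMeasure, JordanDecomposition.toSignedMeasure]
    abel
  rw [pairing_eq_integral_sub_integral hdecomp hf hb, pairing, pairing,
    integral_add_measure (integrable_of_abs_le hf hb) (integrable_of_abs_le hf hb),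
    integral_add_measure (integrable_of_abs_le hf hb) (integrable_of_abs_le hf hb)]
  ring

lemma pairing_sub_right (μ : SignedMeasure S) {f g : S → ℝ} {C D : ℝ} (hf : Measurable f)
    (hfb : ∀ x, |f x| ≤ C) (hg : Measurable g) (hgb : ∀ x, |g x| ≤ D) :
    pairing μ (fun x => f x - g x) = pairing μ f - pairing μ g := by
  rw [pairing, pairing, pairing,
    integral_sub (integrable_of_abs_le hf hfb) (integrable_of_abs_le hg hgb),
    integral_sub (integrable_of_abs_le hf hfb) (integrable_of_abs_le hg hgb)]
  ring

lemma pairing_const_mul (μ : SignedMeasure S) (c : ℝ) (f : S → ℝ) :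
    pairing μ (fun x => c * f x) = c * pairing μ f := by
  rw [pairing, pairing, integral_const_mul, integral_const_mul]
  ring

lemma abs_pairing_le_integral_abs (μ : SignedMeasure S) {f : S → ℝ} {C : ℝ}
    (hf : Measurable f) (hb : ∀ x, |f x| ≤ C) :
    |pairing μ f| ≤ ∫ x, |f x| ∂μ.totalVariation := by
  rw [pairing, SignedMeasure.totalVariation, integral_add_measure
    (integrable_of_abs_le hf hb).abs (integrable_of_abs_le hf hb).abs]
  exact (abs_sub _ _).trans (add_le_add abs_integral_le_integral_abs abs_integral_le_integral_abs)

lemma setIntegral_abs_le_mul_measureReal (m : Measure S) [IsFiniteMeasure m] {s : Set S}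
    {f : S → ℝ} {a : ℝ} (hfa : ∀ x ∈ s, |f x| ≤ a) : ∫ x in s, |f x| ∂m ≤ a * m.real s :=
  (le_abs_self _).trans <| norm_setIntegral_le_of_norm_le_const (f := fun x => |f x|)
    (measure_lt_top m s) fun x hx => by rw [Real.norm_eq_abs, abs_abs]; exact hfa x hx

lemma abs_pairing_le_mul_tvNorm (μ : SignedMeasure S) {f : S → ℝ} {C : ℝ} (hf : Measurable f)
    (hb : ∀ x, |f x| ≤ C) : |pairing μ f| ≤ C * tvNorm μ := by
  have := setIntegral_abs_le_mul_measureReal μ.totalVariation (s := Set.univ) fun x _ => hb x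
  rw [setIntegral_univ] at this
  exact (abs_pairing_le_integral_abs μ hf hb).trans this

lemma abs_pairing_le_of_abs_le_on (μ : SignedMeasure S) {f : S → ℝ} {a b : ℝ} {K : Set S}
    (hK : MeasurableSet K) (hf : Measurable f) (ha : 0 ≤ a) (hb : ∀ x, |f x| ≤ b)
    (hfK : ∀ x ∈ K, |f x| ≤ a) :
    |pairing μ f| ≤ a * tvNorm μ + b * μ.totalVariation.real Kᶜ := by
  calc |pairing μ f| ≤ ∫ x, |f x| ∂μ.totalVariation := abs_pairing_le_integral_abs μ hf hb
    _ = (∫ x in K, |f x| ∂μ.totalVariation) + ∫ x in Kᶜ, |f x| ∂μ.totalVariation :=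
      (integral_add_compl hK (integrable_of_abs_le hf hb).abs).symm
    _ ≤ a * μ.totalVariation.real K + b * μ.totalVariation.real Kᶜ :=
      add_le_add (setIntegral_abs_le_mul_measureReal _ hfK)
        (setIntegral_abs_le_mul_measureReal _ fun x _ => hb x)
    _ ≤ a * tvNorm μ + b * μ.totalVariation.real Kᶜ := by
      gcongr
      exact measureReal_mono (Set.subset_univ K)

end Pairing

def boundedOneLipschitz (S : Type*) [PseudoMetricSpace S] : Set (S → ℝ) :=
  {f | (∀ x, |f x| ≤ 1) ∧ LipschitzWith 1 f}

section BoundedOneLipschitz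
variable {S : Type*} [PseudoMetricSpace S]

lemma IsBL.of_mem_boundedOneLipschitz {f : S → ℝ} (hf : f ∈ boundedOneLipschitz S) : IsBL f :=
  ⟨⟨1, hf.1⟩, 1, hf.2⟩

lemma mem_boundedOneLipschitz_of_add_le_one {f : S → ℝ} {C : ℝ} {K : NNReal}
    (hb : ∀ x, |f x| ≤ C) (hl : LipschitzWith K f) (hCK : C + K ≤ 1) :
    f ∈ boundedOneLipschitz S := by
  refine ⟨fun x => (hb x).trans (by linarith [K.coe_nonneg]), ?_⟩
  rcases isEmpty_or_nonempty S with hS | ⟨⟨x₀⟩⟩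
  · exact fun x => isEmptyElim x
  · have hC : 0 ≤ C := (abs_nonneg _).trans (hb x₀)
    exact hl.weaken (by rw [← NNReal.coe_le_coe]; push_cast; linarith)

end BoundedOneLipschitz

section DualNorm
variable {S : Type*} [PseudoMetricSpace S] [MeasurableSpace S]

lemma blDualNorm_nonneg (μ : SignedMeasure S) : 0 ≤ blDualNorm μ :=
  Real.sSup_nonneg <| by rintro r ⟨f, C, K, -, -, -, rfl⟩; exact abs_nonneg _

lemma blDualNorm_le {μ : SignedMeasure S} {b : ℝ}
    (h : ∀ (f : S → ℝ) (C : ℝ) (K : NNReal), (∀ x, |f x| ≤ C) → LipschitzWith K f →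
      C + K ≤ 1 → |pairing μ f| ≤ b) :
    blDualNorm μ ≤ b := by
  refine csSup_le ⟨_, fun _ => 0, 0, 0, fun _ => by simp, LipschitzWith.const' 0, by simp, rfl⟩ ?_
  rintro r ⟨f, C, K, hb, hl, hCK, rfl⟩
  exact h f C K hb hl hCK

lemma blDualNorm_zero : blDualNorm (0 : SignedMeasure S) = 0 :=
  (blDualNorm_le fun f _ _ _ _ _ => by
    simp [pairing, SignedMeasure.toJordanDecomposition_zero]).antisymm (blDualNorm_nonneg 0)

variable [OpensMeasurableSpace S]

lemma abs_pairing_le_blDualNorm (μ : SignedMeasure S) {f : S → ℝ} {C : ℝ} {K : NNReal}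
    (hb : ∀ x, |f x| ≤ C) (hl : LipschitzWith K f) (hCK : C + K ≤ 1) :
    |pairing μ f| ≤ blDualNorm μ := by
  refine le_csSup ⟨tvNorm μ, ?_⟩ ⟨f, C, K, hb, hl, hCK, rfl⟩
  rintro r ⟨g, D, L, hgb, hgl, hDL, rfl⟩
  have hg := mem_boundedOneLipschitz_of_add_le_one hgb hgl hDL
  simpa using abs_pairing_le_mul_tvNorm μ hg.2.continuous.measurable hg.1

lemma blDualNorm_sub_le_add (ρ ν μ : SignedMeasure S) :
    blDualNorm (ρ - μ) ≤ blDualNorm (ρ - ν) + blDualNorm (ν - μ) := by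
  refine blDualNorm_le fun f C K hb hl hCK => ?_
  have hfm := hl.continuous.measurable
  have hsplit : pairing (ρ - μ) f = pairing (ρ - ν) f + pairing (ν - μ) f := by
    rw [pairing_sub _ _ hfm hb, pairing_sub _ _ hfm hb, pairing_sub _ _ hfm hb]
    ring
  rw [hsplit]
  exact (abs_add_le _ _).trans (add_le_add (abs_pairing_le_blDualNorm _ hb hl hCK)
    (abs_pairing_le_blDualNorm _ hb hl hCK))

lemma abs_pairing_le_mul_blDualNorm (μ : SignedMeasure S) {f : S → ℝ} {C c : ℝ} {K : NNReal}
    (hb : ∀ x, |f x| ≤ C) (hl : LipschitzWith K f) (hc : 0 < c) (hCK : C + K ≤ c) :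
    |pairing μ f| ≤ c * blDualNorm μ := by
  have hc' : 0 < c⁻¹ := inv_pos.2 hc
  have hscaled := abs_pairing_le_blDualNorm μ (f := fun x => c⁻¹ * f x) (C := c⁻¹ * C)
    (fun x => by rw [abs_mul, abs_of_pos hc']; gcongr; exact hb x)
    ((lipschitzWith_smul c⁻¹).comp hl)
    (by
      rw [NNReal.coe_mul, coe_nnnorm, Real.norm_of_nonneg hc'.le, ← mul_add]
      exact (mul_le_mul_of_nonneg_left hCK hc'.le).trans_eq (inv_mul_cancel₀ hc.ne'))
  rw [pairing_const_mul, abs_mul, abs_of_pos hc'] at hscaled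
  rwa [← inv_mul_le_iff₀ hc]

end DualNorm

section Topologies
variable {S : Type*} [PseudoMetricSpace S] [MeasurableSpace S]

lemma continuous_pairing_weakTop {f : S → ℝ} (hf : IsBL f) :
    Continuous[weakTop S, _] fun μ => pairing μ f :=
  continuous_iff_le_induced.2 (iInf_le _ (⟨f, hf⟩ : {g : S → ℝ // IsBL g}))

variable [OpensMeasurableSpace S]

lemma isOpen_normTop_iff {V : Set (SignedMeasure S)} :
    IsOpen[normTop S] V ↔ ∀ ν ∈ V, ∃ ε > 0, {ρ | blDualNorm (ρ - ν) < ε} ⊆ V := by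
  refine ⟨fun hV => ?_, fun h => ?_⟩
  · induction hV with
    | basic B hB =>
      obtain ⟨μ, ε, -, rfl⟩ := hB
      intro ν hν
      exact ⟨ε - blDualNorm (ν - μ), sub_pos.2 hν, fun ρ hρ =>
        show blDualNorm (ρ - μ) < ε by linarith [blDualNorm_sub_le_add ρ ν μ, hρ.out]⟩
    | univ => exact fun _ _ => ⟨1, one_pos, Set.subset_univ _⟩
    | inter U W _ _ hU hW =>
      intro ν hν
      obtain ⟨ε₁, hε₁, hU⟩ := hU ν hν.1
      obtain ⟨ε₂, hε₂, hW⟩ := hW ν hν.2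
      exact ⟨min ε₁ ε₂, lt_min hε₁ hε₂, fun ρ hρ =>
        ⟨hU (hρ.out.trans_le (min_le_left _ _)), hW (hρ.out.trans_le (min_le_right _ _))⟩⟩
    | sUnion Us _ ih =>
      rintro ν ⟨U, hU, hνU⟩
      obtain ⟨ε, hε, hsub⟩ := ih U hU ν hνU
      exact ⟨ε, hε, hsub.trans (Set.subset_sUnion_of_mem hU)⟩
  · refine (@isOpen_iff_forall_mem_open _ (normTop S) _).2 fun ν hν => ?_
    obtain ⟨ε, hε, hsub⟩ := h ν hν
    exact ⟨_, hsub, TopologicalSpace.isOpen_generateFrom_of_mem ⟨ν, ε, hε, rfl⟩,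
      by simpa [blDualNorm_zero] using hε⟩

lemma continuous_pairing_normTop {f : S → ℝ} (hf : IsBL f) :
    Continuous[normTop S, _] fun μ => pairing μ f := by
  obtain ⟨⟨C, hb⟩, K, hl⟩ := hf
  set c := max C 0 + K + 1
  have hc : 0 < c := by positivity
  refine continuous_def.2 fun U hU => isOpen_normTop_iff.2 fun ν hν => ?_
  obtain ⟨r, hr, hball⟩ := Metric.isOpen_iff.1 hU _ hν
  refine ⟨r / c, div_pos hr hc, fun ρ hρ => hball ?_⟩
  have hbc : ∀ x, |f x| ≤ max C 0 := fun x => (hb x).trans (le_max_left _ _)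
  rw [Metric.mem_ball, Real.dist_eq, ← pairing_sub _ _ hl.continuous.measurable hb]
  calc |pairing (ρ - ν) f| ≤ c * blDualNorm (ρ - ν) :=
        abs_pairing_le_mul_blDualNorm _ hbc hl hc (by linarith)
    _ < c * (r / c) := mul_lt_mul_of_pos_left hρ.out hc
    _ = r := mul_div_cancel₀ r hc.ne'

lemma normTop_le_weakTop : normTop S ≤ weakTop S :=
  le_iInf fun f => continuous_iff_le_induced.1 (continuous_pairing_normTop f.2)

end Topologies

lemma exists_finite_approx_on_compact_of_lipschitz {S : Type*} [PseudoMetricSpace S] {K : Set S}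
    (hK : IsCompact K) {F : Set (S → ℝ)} {B : ℝ} {L : NNReal}
    (hF : ∀ f ∈ F, (∀ x, |f x| ≤ B) ∧ LipschitzWith L f) {ε : ℝ} (hε : 0 < ε) :
    ∃ T ⊆ F, T.Finite ∧ ∀ f ∈ F, ∃ g ∈ T, ∀ x ∈ K, |f x - g x| < ε := by
  set η := ε / (2 * L + 1)
  have hη : 0 < η := by positivity
  obtain ⟨s, -, hs, hKs⟩ := finite_cover_balls_of_compact hK hη
  have : Finite s := hs.to_subtype
  -- Two members of `F` with the same `η`-rounded values on the net `s` are uniformly close on `K`.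
  let Φ : (S → ℝ) → s → ℤ := fun f y => ⌊f y / η⌋
  have hΦF : (Φ '' F).Finite := by
    refine (Set.Finite.pi fun _ => Set.finite_Icc ⌊-B / η⌋ ⌊B / η⌋).subset ?_
    rintro _ ⟨f, hf, rfl⟩ y -
    have hfy := abs_le.1 ((hF f hf).1 y)
    exact ⟨Int.floor_mono (div_le_div_of_nonneg_right hfy.1 hη.le),
      Int.floor_mono (div_le_div_of_nonneg_right hfy.2 hη.le)⟩
  obtain ⟨T, hTF, hT⟩ := Set.exists_subset_bijOn F Φ
  refine ⟨T, hTF, Set.Finite.of_finite_image (hT.image_eq ▸ hΦF) hT.injOn, fun f hf => ?_⟩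
  obtain ⟨g, hgT, hgf⟩ := hT.surjOn ⟨f, hf, rfl⟩
  refine ⟨g, hgT, fun x hx => ?_⟩
  obtain ⟨y, hys, hxy⟩ := Set.mem_iUnion₂.1 (hKs hx)
  have hclose : |g y - f y| < η := by
    have h := Int.abs_sub_lt_one_of_floor_eq_floor (congrFun hgf ⟨y, hys⟩)
    rwa [← sub_div, abs_div, abs_of_pos hη, div_lt_one hη] at h
  have hlip : ∀ h ∈ F, |h x - h y| ≤ L * η := fun h hh => by
    simpa [← Real.dist_eq] using ((hF h hh).2.dist_le_mul x y).trans
      (mul_le_mul_of_nonneg_left (Metric.mem_ball.1 hxy).le L.coe_nonneg)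
  calc |f x - g x| = |(f x - f y) - (g x - g y) - (g y - f y)| := by ring_nf
    _ ≤ |f x - f y| + |g x - g y| + |g y - f y| := by
      linarith [abs_sub (f x - f y - (g x - g y)) (g y - f y), abs_sub (f x - f y) (g x - g y)]
    _ < L * η + L * η + η := by linarith [hlip f hf, hlip g (hTF hgT)]
    _ = ε := by simp only [η]; field_simp; ring

section Tight
variable {S : Type*} [PseudoMetricSpace S] [MeasurableSpace S] [OpensMeasurableSpace S]

lemma blDualNorm_sub_le_of_approx_on {K : Set S} (hK : MeasurableSet K) {T : Set (S → ℝ)}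
    (hT : T ⊆ boundedOneLipschitz S) {η : ℝ} (hη : 0 ≤ η)
    (hTK : ∀ f ∈ boundedOneLipschitz S, ∃ g ∈ T, ∀ x ∈ K, |f x - g x| < η)
    {ρ ν : SignedMeasure S} {δ : ℝ} (hρν : ∀ g ∈ T, |pairing ρ g - pairing ν g| ≤ δ) :
    blDualNorm (ρ - ν) ≤ δ + (η * tvNorm ρ + 2 * ρ.totalVariation.real Kᶜ)
      + (η * tvNorm ν + 2 * ν.totalVariation.real Kᶜ) := by
  refine blDualNorm_le fun f C L hb hl hCL => ?_
  have hf := mem_boundedOneLipschitz_of_add_le_one hb hl hCL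
  obtain ⟨g, hgT, hgK⟩ := hTK f hf
  have hg := hT hgT
  have hfm := hf.2.continuous.measurable
  have hgm := hg.2.continuous.measurable
  have hdiff_le : ∀ x, |f x - g x| ≤ 2 := fun x => by
    linarith [abs_sub (f x) (g x), hf.1 x, hg.1 x]
  have hdiff : ∀ μ : SignedMeasure S,
      |pairing μ (fun x => f x - g x)| ≤ η * tvNorm μ + 2 * μ.totalVariation.real Kᶜ :=
    fun μ => abs_pairing_le_of_abs_le_on μ hK (hfm.sub hgm) hη hdiff_le fun x hx => (hgK x hx).le
  have hsplit : pairing (ρ - ν) f = (pairing ρ g - pairing ν g)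
      + pairing ρ (fun x => f x - g x) - pairing ν (fun x => f x - g x) := by
    rw [pairing_sub _ _ hfm hf.1, pairing_sub_right _ hfm hf.1 hgm hg.1,
      pairing_sub_right _ hfm hf.1 hgm hg.1]
    ring
  rw [hsplit]
  linarith [abs_sub ((pairing ρ g - pairing ν g) + pairing ρ (fun x => f x - g x))
      (pairing ν (fun x => f x - g x)),
    abs_add_le (pairing ρ g - pairing ν g) (pairing ρ (fun x => f x - g x)),
    hρν g hgT, hdiff ρ, hdiff ν]

end Tight

lemma exists_mem_nhds_weakTop_blDualNorm_sub_lt {S : Type*} [MetricSpace S] [MeasurableSpace S]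
    [OpensMeasurableSpace S] {M : Set (SignedMeasure S)} {C : ℝ}
    (hC : ∀ μ ∈ M, tvNorm μ ≤ C)
    (htight : ∀ ε > 0, ∃ K : Set S, IsCompact K ∧ ∀ μ ∈ M, μ.totalVariation.real Kᶜ < ε)
    {ν : SignedMeasure S} (hν : ν ∈ M) {ε : ℝ} (hε : 0 < ε) :
    ∃ W ∈ @nhds _ (weakTop S) ν, ∀ ρ ∈ M, ρ ∈ W → blDualNorm (ρ - ν) < ε := by
  obtain ⟨K, hK, hKM⟩ := htight (ε / 8) (by positivity)
  set c := max C 0 + 1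
  have hc : 0 < c := by positivity
  obtain ⟨T, hT, hTfin, hTK⟩ := exists_finite_approx_on_compact_of_lipschitz hK
    (F := boundedOneLipschitz S) (fun f hf => hf) (show 0 < ε / (8 * c) by positivity)
  have hsmall : ∀ μ ∈ M, ε / (8 * c) * tvNorm μ ≤ ε / 8 := fun μ hμ => by
    calc ε / (8 * c) * tvNorm μ ≤ ε / (8 * c) * c := by
          gcongr; linarith [hC μ hμ, le_max_left C 0]
      _ = ε / 8 := by field_simp
  let := weakTop S
  refine ⟨⋂ g ∈ T, (fun μ => pairing μ g) ⁻¹' Metric.ball (pairing ν g) (ε / 8),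
    (Filter.biInter_mem hTfin).2 fun g hg =>
      (continuous_pairing_weakTop (IsBL.of_mem_boundedOneLipschitz (hT hg))).continuousAt
        |>.preimage_mem_nhds (Metric.ball_mem_nhds _ (by positivity)), fun ρ hρ hρW => ?_⟩
  simp only [Set.mem_iInter, Set.mem_preimage, Metric.mem_ball, Real.dist_eq] at hρW
  have := blDualNorm_sub_le_of_approx_on hK.isClosed.measurableSet hT (by positivity) hTK
    fun g hg => (hρW g hg).le
  linarith [hsmall ρ hρ, hsmall ν hν, hKM ρ hρ, hKM ν hν]

theorem coincidence_of_topologies_of_tight_general {S : Type*} [MetricSpace S]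
    [MeasurableSpace S] [BorelSpace S]
    (M : Set (SignedMeasure S)) (hTV : ∃ C : ℝ, ∀ μ ∈ M, tvNorm μ ≤ C)
    (htight : ∀ ε : ℝ, 0 < ε → ∃ K : Set S, IsCompact K ∧
      ∀ μ ∈ M, ((μ : SignedMeasure S).totalVariation Kᶜ).toReal < ε) :
    TopologicalSpace.induced ((↑) : M → SignedMeasure S) (weakTop S) =
      TopologicalSpace.induced ((↑) : M → SignedMeasure S) (normTop S) := by
  obtain ⟨C, hC⟩ := hTV
  refine le_antisymm ((le_iff_nhds _ _).2 fun ν => ?_) (induced_mono normTop_le_weakTop)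
  rw [@nhds_induced _ _ (weakTop S), @nhds_induced _ _ (normTop S)]
  intro s hs
  obtain ⟨V, hV, hVs⟩ := Filter.mem_comap.1 hs
  obtain ⟨U, hUV, hU, hνU⟩ := (@mem_nhds_iff _ (normTop S) _ _).1 hV
  obtain ⟨ε, hε, hball⟩ := isOpen_normTop_iff.1 hU ν hνU
  obtain ⟨W, hW, hWball⟩ := exists_mem_nhds_weakTop_blDualNorm_sub_lt hC htight ν.2 hε
  exact Filter.mem_comap.2 ⟨W, hW, fun ρ hρ => hVs (hUV (hball (hWball ρ ρ.2 hρ)))⟩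

/-- If `M ⊆ M(S)` is bounded in total variation norm and uniformly tight, then the
`σ(M(S), BL(S))`-weak topology and the `‖·‖*_BL`-norm topology coincide on `M`. -/
theorem coincidence_of_topologies_of_tight {S : Type*} [MetricSpace S] [CompleteSpace S]
    [TopologicalSpace.SeparableSpace S] [MeasurableSpace S] [BorelSpace S]
    (M : Set (SignedMeasure S)) (hTV : ∃ C : ℝ, ∀ μ ∈ M, tvNorm μ ≤ C)
    (htight : ∀ ε : ℝ, 0 < ε → ∃ K : Set S, IsCompact K ∧
      ∀ μ ∈ M, ((μ : SignedMeasure S).totalVariation Kᶜ).toReal < ε) :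
    TopologicalSpace.induced ((↑) : M → SignedMeasure S) (weakTop S) =
      TopologicalSpace.induced ((↑) : M → SignedMeasure S) (normTop S) :=
  coincidence_of_topologies_of_tight_general M hTV htight
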